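/- arXiv:1206.6189 — 2 statements merged into one kernel-verified Lean document; each statement's English description precedes it below -/
import Mathlib

section
/- Let H = y^N + a_1(x)y^{N-1} + ... + a_N(x) be a reduced polynomial in K[[x]][y] with a_i(0) = 0 for all i, and let H = H_1 H_2 be its decomposition into two irreducible factors in K[[x]][y]. If μ_{(0,0)}(H) = 1, then (H_1, H_2) is a local system of coordinates at (0,0); that is, H_1 and H_2 generate the maximal ideal of K[[x,y]]. -/
set_option synthInstance.maxHeartbeats 1000000
set_option maxHeartbeats 1000000

open Polynomial

noncomputable section

/-- `K[[x]][y]`. -/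
abbrev PSPoly (K : Type*) [Field K] := Polynomial (PowerSeries K)

variable (K : Type*) [Field K] [IsAlgClosed K] [CharZero K]

/-- partial derivative with respect to `x` on `K[[x]][y]` (coefficientwise derivative). -/
def psdx (H : PSPoly K) : PSPoly K :=
  H.sum fun i a => Polynomial.C (PowerSeries.derivative K a) * Polynomial.X ^ i

/-- the Milnor number `μ_{(0,0)}(H) = dim_K K[[x]][y]/(H_x, H_y)`. -/
def milnor00 (H : PSPoly K) : ℕ :=
  Module.finrank K (PSPoly K ⧸ Ideal.span {psdx K H, Polynomial.derivative H})

/-- the local intersection multiplicity `int_{(0,0)}(G₁,G₂) = dim_K K[[x,y]]/(G₁,G₂)`,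
where `K[[x,y]]` is realized as `K[[x]][[y]]`. -/
def int00 (G₁ G₂ : PSPoly K) : ℕ :=
  Module.finrank K (PowerSeries (PowerSeries K) ⧸
    Ideal.span {Polynomial.coeToPowerSeries.ringHom G₁, Polynomial.coeToPowerSeries.ringHom G₂})

/-- `H` is a distinguished polynomial: all non-leading coefficients `a_i` satisfy `a_i(0) = 0`. -/
def Distinguished (H : PSPoly K) : Prop :=
  ∀ k < H.natDegree, PowerSeries.constantCoeff (H.coeff k) = 0

end

section AuxLemmas
set_option linter.unusedSectionVars false
variable (K : Type*) [Field K] [IsAlgClosed K] [CharZero K]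

lemma psdx_coeff (f : PSPoly K) (n : ℕ) :
    (psdx K f).coeff n = PowerSeries.derivative K (f.coeff n) := by
  rw [psdx, Polynomial.sum_def]
  simp_rw [Polynomial.C_mul_X_pow_eq_monomial]
  rw [Polynomial.finset_sum_coeff]
  simp_rw [Polynomial.coeff_monomial]
  rw [Finset.sum_ite_eq' f.support n fun i => PowerSeries.derivative K (f.coeff i)]
  by_cases h : n ∈ f.support
  · simp [h]
  · simp only [h, if_neg, if_false]
    rw [Polynomial.notMem_support_iff.mp h, map_zero]

lemma psdx_mul (f g : PSPoly K) : psdx K (f*g) = psdx K f * g + f * psdx K g := by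
  refine Polynomial.ext fun n => ?_
  rw [psdx_coeff]
  rw [Polynomial.coeff_mul]
  rw [map_sum (PowerSeries.derivative K) (fun p : ℕ×ℕ => f.coeff p.1 * g.coeff p.2)
      (Finset.HasAntidiagonal.antidiagonal n)]
  rw [Polynomial.coeff_add, Polynomial.coeff_mul, Polynomial.coeff_mul,
    ← Finset.sum_add_distrib]
  refine Finset.sum_congr rfl fun p hp => ?_
  rw [psdx_coeff, psdx_coeff, Derivation.leibniz]
  simp only [smul_eq_mul]
  ring

set_option linter.unusedSectionVars false

lemma exists_algHom (I : Ideal (PSPoly K)) (h : Module.finrank K (PSPoly K ⧸ I) = 1) :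
    ∃ φ : PSPoly K →ₐ[K] K, ∀ f, φ f = 0 ↔ f ∈ I := by
  haveI : FiniteDimensional K (PSPoly K ⧸ I) := FiniteDimensional.of_finrank_eq_succ h
  have hItop : I ≠ ⊤ := by
    intro htop
    haveI hs : Subsingleton (PSPoly K ⧸ I) := Ideal.Quotient.subsingleton_iff.mpr htop
    have h0 : Module.finrank K (PSPoly K ⧸ I) = 0 := Module.finrank_zero_of_subsingleton
    rw [h] at h0
    exact Nat.one_ne_zero h0
  haveI : Nontrivial (PSPoly K ⧸ I) := Ideal.Quotient.nontrivial_iff.mpr hItop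
  have hone : (1 : PSPoly K ⧸ I) ≠ 0 := by
    intro hc
    rw [show (1 : PSPoly K ⧸ I) = Ideal.Quotient.mk I 1 from rfl,
      Ideal.Quotient.eq_zero_iff_mem] at hc
    exact hItop (Ideal.eq_top_iff_one I |>.mpr hc)
  have hspan : Submodule.span K {(1 : PSPoly K ⧸ I)} = ⊤ := by
    apply Submodule.eq_top_of_finrank_eq
    rw [finrank_span_singleton hone, h]
  have hsurj : Function.Surjective (Algebra.ofId K (PSPoly K ⧸ I)) := by
    intro q
    have hq : q ∈ Submodule.span K {(1 : PSPoly K ⧸ I)} := hspan ▸ Submodule.mem_top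
    obtain ⟨c, hc⟩ := Submodule.mem_span_singleton.mp hq
    exact ⟨c, by rw [Algebra.ofId_apply, Algebra.algebraMap_eq_smul_one]; exact hc⟩
  have hbij : Function.Bijective (Algebra.ofId K (PSPoly K ⧸ I)) :=
    ⟨RingHom.injective _, hsurj⟩
  let e := AlgEquiv.ofBijective (Algebra.ofId K (PSPoly K ⧸ I)) hbij
  refine ⟨(e.symm : (PSPoly K ⧸ I) →ₐ[K] K).comp (Ideal.Quotient.mkₐ K I), fun f => ?_⟩
  simp only [AlgHom.comp_apply]
  rw [show (Ideal.Quotient.mkₐ K I) f = Ideal.Quotient.mk I f from rfl]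
  constructor
  · intro h0
    have h1 : Ideal.Quotient.mk I f = 0 := by
      have h2 := congrArg e h0
      simpa using h2
    exact (Ideal.Quotient.eq_zero_iff_mem).mp h1
  · intro hf
    rw [Ideal.Quotient.eq_zero_iff_mem.mpr hf, map_zero]

lemma algHom_C (φ : PSPoly K →ₐ[K] K) (p : PowerSeries K) :
    φ (Polynomial.C p) = PowerSeries.constantCoeff p := by
  have halg : ∀ c : K, Polynomial.C (PowerSeries.C c) = algebraMap K (PSPoly K) c := by
    intro c; rfl
  have hX : φ (Polynomial.C (PowerSeries.X : PowerSeries K)) = 0 := by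
    by_contra hc
    have hu : IsUnit ((PowerSeries.X : PowerSeries K) -
        PowerSeries.C (φ (Polynomial.C (PowerSeries.X : PowerSeries K)))) := by
      rw [PowerSeries.isUnit_iff_constantCoeff]
      simp only [map_sub, PowerSeries.constantCoeff_X, PowerSeries.constantCoeff_C, zero_sub]
      exact (neg_ne_zero.mpr hc).isUnit
    have h2 := (hu.map (Polynomial.C : PowerSeries K →+* PSPoly K)).map φ.toRingHom
    rw [map_sub, halg] at h2
    simp only [AlgHom.toRingHom_eq_coe, RingHom.coe_coe, map_sub, AlgHom.commutes,
      Algebra.algebraMap_self, RingHom.id_apply, sub_self] at h2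
    exact not_isUnit_zero h2
  obtain ⟨q, hq⟩ : (PowerSeries.X : PowerSeries K) ∣
      (p - PowerSeries.C (PowerSeries.constantCoeff p)) :=
    PowerSeries.X_dvd_iff.mpr (by simp)
  have hp : p = PowerSeries.C (PowerSeries.constantCoeff p) + PowerSeries.X * q := by
    rw [← hq]; ring
  calc φ (Polynomial.C p)
      = φ (Polynomial.C (PowerSeries.C (PowerSeries.constantCoeff p)))
        + φ (Polynomial.C (PowerSeries.X : PowerSeries K)) * φ (Polynomial.C q) := by
        rw [← map_mul, ← map_add, ← Polynomial.C_mul, ← Polynomial.C_add, ← hp]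
    _ = PowerSeries.constantCoeff p := by
        rw [hX, zero_mul, add_zero, halg]
        exact φ.commutes _

lemma algHom_eval (φ : PSPoly K →ₐ[K] K) (f : PSPoly K) :
    φ f = Polynomial.eval (φ Polynomial.X)
      (f.map (PowerSeries.constantCoeff : PowerSeries K →+* K)) := by
  have : φ.toRingHom = (Polynomial.evalRingHom (φ Polynomial.X)).comp
      (Polynomial.mapRingHom (PowerSeries.constantCoeff : PowerSeries K →+* K)) := by
    apply Polynomial.ringHom_ext
    · intro a
      simp only [AlgHom.toRingHom_eq_coe, RingHom.coe_coe, RingHom.comp_apply, coe_mapRingHom,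
        Polynomial.map_C, eval_C, coe_evalRingHom]
      exact algHom_C K φ a
    · simp
  have h2 := congrArg (fun g => g f) this
  simpa using h2

lemma map_eq_X_pow (H : PSPoly K) (hmonic : H.Monic)
    (hdist : ∀ k < H.natDegree, PowerSeries.constantCoeff (H.coeff k) = 0) :
    H.map (PowerSeries.constantCoeff : PowerSeries K →+* K)
      = Polynomial.X ^ H.natDegree := by
  refine Polynomial.ext fun k => ?_
  rw [Polynomial.coeff_map, Polynomial.coeff_X_pow]
  rcases lt_trichotomy k H.natDegree with hk | hk | hk
  · rw [hdist k hk, if_neg hk.ne]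
  · rw [hk, if_pos rfl]
    rw [Polynomial.Monic.coeff_natDegree hmonic, map_one]
  · rw [Polynomial.coeff_eq_zero_of_natDegree_lt hk, map_zero, if_neg hk.ne']

lemma coeff_zero_of_mul_eq_X_pow (A B : Polynomial K) (N : ℕ) (hN : 0 < N)
    (hAB : A * B = Polynomial.X ^ N) (hA : 0 < A.natDegree) : A.coeff 0 = 0 := by
  have hdeg : A.degree ≠ 0 := by
    have := Polynomial.natDegree_pos_iff_degree_pos.mp hA
    exact this.ne'
  obtain ⟨r, hr⟩ := IsAlgClosed.exists_root A hdeg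
  have hrN : (0 : K) = r ^ N := by
    have h2 := congrArg (Polynomial.eval r) hAB
    rw [Polynomial.eval_mul, Polynomial.eval_pow, Polynomial.eval_X, hr, zero_mul] at h2
    exact h2
  have hr0 : r = 0 := by
    have := pow_eq_zero_iff hN.ne' |>.mp hrN.symm
    exact this
  rw [hr0] at hr
  rw [Polynomial.coeff_zero_eq_eval_zero]
  exact hr

lemma maximalIdeal_le_span_XX :
    IsLocalRing.maximalIdeal (PowerSeries (PowerSeries K)) ≤
      Ideal.span {PowerSeries.C (PowerSeries.X : PowerSeries K),
        (PowerSeries.X : PowerSeries (PowerSeries K))} := by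
  intro f hf
  rw [IsLocalRing.mem_maximalIdeal, mem_nonunits_iff,
    PowerSeries.isUnit_iff_constantCoeff] at hf
  have h0 : PowerSeries.constantCoeff
      (PowerSeries.constantCoeff f) = 0 := by
    by_contra hc
    exact hf (PowerSeries.isUnit_iff_constantCoeff.mpr (Ne.isUnit hc))
  obtain ⟨h, hh⟩ := PowerSeries.X_dvd_iff.mpr h0
  obtain ⟨g, hg⟩ : (PowerSeries.X : PowerSeries (PowerSeries K)) ∣
      (f - PowerSeries.C (PowerSeries.constantCoeff f)) :=
    PowerSeries.X_dvd_iff.mpr (by simp)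
  refine Ideal.mem_span_pair.mpr ⟨PowerSeries.C h, g, ?_⟩
  have hf2 : f = PowerSeries.C (PowerSeries.constantCoeff f)
      + PowerSeries.X * g := by rw [← hg]; ring
  rw [hf2, hh, ← map_mul]
  ring


end AuxLemmas

/-- If `H = H₁ H₂` is a monic distinguished reduced polynomial in
`K[[x]][y]` with `H₁, H₂` irreducible and `μ₀₀(H) = 1`, then `(H₁, H₂)` is a local
system of coordinates at `(0,0)`: `H₁, H₂` generate the maximal ideal of `K[[x,y]]`. -/
theorem span_eq_maximalIdeal_of_milnor00_eq_one
    (K : Type*) [Field K] [IsAlgClosed K] [CharZero K]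
    (H H₁ H₂ : PSPoly K) (hmonic : H.Monic) (hN : 0 < H.natDegree)
    (hdist : Distinguished K H) (hred : Squarefree H)
    (hirr₁ : Irreducible H₁) (hirr₂ : Irreducible H₂) (hfac : H = H₁ * H₂)
    (hmu : milnor00 K H = 1) :
    Ideal.span {Polynomial.coeToPowerSeries.ringHom H₁,
        Polynomial.coeToPowerSeries.ringHom H₂} =
      IsLocalRing.maximalIdeal (PowerSeries (PowerSeries K)) := by
  classical
  have hdist' : ∀ k < H.natDegree, PowerSeries.constantCoeff (H.coeff k) = 0 := hdist
  have hmu' : Module.finrank K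
      (PSPoly K ⧸ Ideal.span {psdx K H, Polynomial.derivative H}) = 1 := hmu
  set σ : PowerSeries K →+* K := (PowerSeries.constantCoeff : PowerSeries K →+* K) with hσ
  have h₁0 : H₁ ≠ 0 := hirr₁.ne_zero
  have h₂0 : H₂ ≠ 0 := hirr₂.ne_zero
  have hlead : H₁.leadingCoeff * H₂.leadingCoeff = 1 := by
    rw [← Polynomial.leadingCoeff_mul, ← hfac, hmonic]
  have hu₁ : IsUnit H₁.leadingCoeff := IsUnit.of_mul_eq_one _ hlead
  have hu₂ : IsUnit H₂.leadingCoeff := IsUnit.of_mul_eq_one _ (by rw [mul_comm]; exact hlead)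
  have hd₁ : 0 < H₁.natDegree := by
    rcases Nat.eq_zero_or_pos H₁.natDegree with h | h
    swap
    · exact h
    · exfalso
      apply hirr₁.not_isUnit
      rw [Polynomial.eq_C_of_natDegree_eq_zero h]
      refine Polynomial.isUnit_C.mpr ?_
      have : H₁.coeff 0 = H₁.leadingCoeff := by
        rw [Polynomial.leadingCoeff, h]
      rw [this]; exact hu₁
  have hd₂ : 0 < H₂.natDegree := by
    rcases Nat.eq_zero_or_pos H₂.natDegree with h | h
    swap
    · exact h
    · exfalso
      apply hirr₂.not_isUnit
      rw [Polynomial.eq_C_of_natDegree_eq_zero h]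
      refine Polynomial.isUnit_C.mpr ?_
      have : H₂.coeff 0 = H₂.leadingCoeff := by
        rw [Polynomial.leadingCoeff, h]
      rw [this]; exact hu₂
  have hNdeg : H.natDegree = H₁.natDegree + H₂.natDegree := by
    rw [hfac, Polynomial.natDegree_mul h₁0 h₂0]
  have hN2 : 2 ≤ H.natDegree := by omega
  have hmapH : H.map σ = Polynomial.X ^ H.natDegree := map_eq_X_pow K H hmonic hdist'
  have hmapfac : (H₁.map σ) * (H₂.map σ) = Polynomial.X ^ H.natDegree := by
    rw [← Polynomial.map_mul, ← hfac, hmapH]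
  have hdm₁ : (H₁.map σ).natDegree = H₁.natDegree :=
    Polynomial.natDegree_map_of_leadingCoeff_ne_zero σ
      (by
        intro hc
        have := hu₁.map σ
        rw [hc] at this
        exact not_isUnit_zero this)
  have hdm₂ : (H₂.map σ).natDegree = H₂.natDegree :=
    Polynomial.natDegree_map_of_leadingCoeff_ne_zero σ
      (by
        intro hc
        have := hu₂.map σ
        rw [hc] at this
        exact not_isUnit_zero this)
  have hc₁ : σ (H₁.coeff 0) = 0 := by
    have := coeff_zero_of_mul_eq_X_pow K (H₁.map σ) (H₂.map σ) H.natDegree hN hmapfac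
      (by rw [hdm₁]; exact hd₁)
    rwa [Polynomial.coeff_map] at this
  have hc₂ : σ (H₂.coeff 0) = 0 := by
    have := coeff_zero_of_mul_eq_X_pow K (H₂.map σ) (H₁.map σ) H.natDegree hN
      (by rw [mul_comm]; exact hmapfac) (by rw [hdm₂]; exact hd₂)
    rwa [Polynomial.coeff_map] at this
  obtain ⟨φ, hφ⟩ := exists_algHom K (Ideal.span {psdx K H, Polynomial.derivative H}) hmu'
  have hder : φ (Polynomial.derivative H) = 0 :=
    (hφ _).mpr (Ideal.subset_span (by simp))
  have hdX : φ Polynomial.X = 0 := by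
    rw [algHom_eval K φ (Polynomial.derivative H), ← Polynomial.derivative_map, hmapH,
      Polynomial.derivative_X_pow, Polynomial.eval_mul, Polynomial.eval_pow,
      Polynomial.eval_C, Polynomial.eval_X] at hder
    have hNK : ((H.natDegree : K)) ≠ 0 := Nat.cast_ne_zero.mpr hN.ne'
    have hpow : (φ Polynomial.X) ^ (H.natDegree - 1) = 0 := by
      rcases mul_eq_zero.mp hder with h | h
      · exact absurd h hNK
      · exact h
    exact pow_eq_zero_iff (by omega) |>.mp hpow
  have hxI : Polynomial.C (PowerSeries.X : PowerSeries K) ∈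
      Ideal.span {psdx K H, Polynomial.derivative H} := by
    refine (hφ _).mp ?_
    rw [algHom_C K φ]
    simp
  have hyI : Polynomial.X ∈ Ideal.span {psdx K H, Polynomial.derivative H} :=
    (hφ _).mp hdX
  have hIle : Ideal.span {psdx K H, Polynomial.derivative H} ≤ Ideal.span {H₁, H₂} := by
    rw [Ideal.span_le]
    rintro g hg
    rcases Set.mem_insert_iff.mp hg with rfl | hg
    · exact Ideal.mem_span_pair.mpr ⟨psdx K H₂, psdx K H₁, by rw [hfac, psdx_mul]; ring⟩
    · rcases Set.mem_singleton_iff.mp hg with rfl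
      exact Ideal.mem_span_pair.mpr
        ⟨Polynomial.derivative H₂, Polynomial.derivative H₁,
          by rw [hfac, Polynomial.derivative_mul]; ring⟩
  set τ : PSPoly K →+* PowerSeries (PowerSeries K) := Polynomial.coeToPowerSeries.ringHom with hτ
  have hxspan : PowerSeries.C (PowerSeries.X : PowerSeries K) ∈
      Ideal.span {τ H₁, τ H₂} := by
    obtain ⟨a, b, hab⟩ := Ideal.mem_span_pair.mp (hIle hxI)
    refine Ideal.mem_span_pair.mpr ⟨τ a, τ b, ?_⟩
    rw [← map_mul, ← map_mul, ← map_add, hab]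
    simp [τ, Polynomial.coeToPowerSeries.ringHom_apply, Polynomial.coe_C]
  have hyspan : (PowerSeries.X : PowerSeries (PowerSeries K)) ∈
      Ideal.span {τ H₁, τ H₂} := by
    obtain ⟨a, b, hab⟩ := Ideal.mem_span_pair.mp (hIle hyI)
    refine Ideal.mem_span_pair.mpr ⟨τ a, τ b, ?_⟩
    rw [← map_mul, ← map_mul, ← map_add, hab]
    simp [τ, Polynomial.coeToPowerSeries.ringHom_apply, Polynomial.coe_X]
  apply le_antisymm
  · rw [Ideal.span_le]
    rintro g hg
    have hg2 : g = τ H₁ ∨ g = τ H₂ := by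
      rcases Set.mem_insert_iff.mp hg with h | h
      · exact Or.inl h
      · exact Or.inr (Set.mem_singleton_iff.mp h)
    rw [SetLike.mem_coe, IsLocalRing.mem_maximalIdeal, mem_nonunits_iff]
    rcases hg2 with rfl | rfl
    · intro hunit
      have h2 := (PowerSeries.isUnit_iff_constantCoeff.mp hunit).map σ
      have h3 : PowerSeries.constantCoeff (τ H₁) = H₁.coeff 0 := by
        simp [τ, ← PowerSeries.coeff_zero_eq_constantCoeff, Polynomial.coeff_coe]
      rw [h3, hc₁] at h2
      exact not_isUnit_zero h2
    · intro hunit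
      have h2 := (PowerSeries.isUnit_iff_constantCoeff.mp hunit).map σ
      have h3 : PowerSeries.constantCoeff (τ H₂) = H₂.coeff 0 := by
        simp [τ, ← PowerSeries.coeff_zero_eq_constantCoeff, Polynomial.coeff_coe]
      rw [h3, hc₂] at h2
      exact not_isUnit_zero h2
  · refine le_trans (maximalIdeal_le_span_XX K) ?_
    rw [Ideal.span_le]
    rintro g hg
    rcases Set.mem_insert_iff.mp hg with rfl | hg
    · exact hxspan
    · rcases Set.mem_singleton_iff.mp hg with rfl
      exact hyspan
end

section
/- Let f ≠ g be two irreducible polynomials of K[x][y], monic in y, each admitting a polynomial parametrization. If int(f,g) = 0, then f = g + λ_1 for some λ_1 ∈ K*. -/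
set_option synthInstance.maxHeartbeats 1000000
set_option maxHeartbeats 1000000

open Polynomial

noncomputable section

/-- `K[x][y]`: the outer variable is `y`, coefficients in `K[x]`. -/
abbrev Poly2 (K : Type*) [Field K] := Polynomial (Polynomial K)

variable (K : Type*) [Field K] [IsAlgClosed K] [CharZero K]

/-- partial derivative with respect to `x` (coefficientwise derivative). -/
def pdx (f : Poly2 K) : Poly2 K := f.sum fun i a => C (derivative a) * X ^ i

/-- partial derivative with respect to `y`. -/
def pdy (f : Poly2 K) : Poly2 K := derivative f

/-- intersection multiplicity `int(f,g) = dim_K K[x,y]/(f,g)`. -/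
def intMult (f g : Poly2 K) : ℕ := Module.finrank K (Poly2 K ⧸ Ideal.span {f, g})

/-- the condition `deg_x a_i(x) < i` on `f = y^n + a_1(x) y^(n-1) + ... + a_n(x)`. -/
def DegCond (f : Poly2 K) : Prop :=
  ∀ k < f.natDegree, (f.coeff k).degree < ((f.natDegree - k : ℕ) : WithBot ℕ)

/-- the local equation `F(y,u) = h_f(1,y,u) ∈ K[[u]][y]` of `f` at infinity, where
`h_f(x,y,u) = u^n f(x/u, y/u)`; the coefficient of `y^k` is `u^(n-k) a_(n-k)(1/u)`,
i.e. the reversal `reflect (n-k) a_(n-k)` of the coefficient of `y^k` of `f`. -/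
def atInfinity (f : Poly2 K) : Polynomial (PowerSeries K) :=
  ∑ k ∈ Finset.range (f.natDegree + 1),
    Polynomial.C ((Polynomial.reflect (f.natDegree - k) (f.coeff k) : Polynomial K) :
      PowerSeries K) * Polynomial.X ^ k

/-- `f` has one place at infinity: `F(y,u)` is irreducible in `K[[u]][y]`. -/
def OnePlaceAtInfinity (f : Poly2 K) : Prop := Irreducible (atInfinity K f)

/-- `f` is a rational polynomial: irreducible with a nonconstant rational parametrization. -/
def IsRationalPoly (f : Poly2 K) : Prop :=
  Irreducible f ∧ ∃ u v : RatFunc K,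
    ¬((∃ c, u = RatFunc.C c) ∧ (∃ c, v = RatFunc.C c)) ∧
      Polynomial.eval₂ (Polynomial.aeval u).toRingHom v f = 0

/-- the inclusion `K[x][y] → K[[x]][[y]] = K[[x,y]]`. -/
def toLocal : Poly2 K →+* PowerSeries (PowerSeries K) :=
  (Polynomial.coeToPowerSeries.ringHom).comp
    (Polynomial.mapRingHom Polynomial.coeToPowerSeries.ringHom)

/-- the translate `f(x + a, y + b)` of `f`, for `p = (a,b)`. -/
def shiftPt (f : Poly2 K) (p : K × K) : Poly2 K :=
  (f.map (Polynomial.aeval (Polynomial.X + Polynomial.C p.1)).toRingHom).comp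
    (Polynomial.X + Polynomial.C (Polynomial.C p.2))

/-- local intersection multiplicity
`int_p(f,g) = dim_K K[[x,y]]/(f(x+a,y+b), g(x+a,y+b))` at `p = (a,b)`. -/
def intLocal (p : K × K) (f g : Poly2 K) : ℕ :=
  Module.finrank K (PowerSeries (PowerSeries K) ⧸
    Ideal.span {toLocal K (shiftPt K f p), toLocal K (shiftPt K g p)})

/-- local Milnor number `μ_p(f) = int_p(f_x, f_y)`. -/
def milnorAt (f : Poly2 K) (p : K × K) : ℕ := intLocal K p (pdx K f) (pdy K f)

/-- evaluation of `f` at a point of `K²`. -/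
def evalAt (f : Poly2 K) (p : K × K) : K :=
  Polynomial.eval₂ (Polynomial.evalRingHom p.1) p.2 f

/-- the zero set `V(f) ⊆ K²`. -/
def Vset (f : Poly2 K) : Set (K × K) := {p | evalAt K f p = 0}

/-- `μ(f) = Σ_{p ∈ V(f)} μ_p(f)`. -/
def milnorTotal (f : Poly2 K) : ℕ := ∑ᶠ p ∈ Vset K f, milnorAt K f p

/-- `p` is a singular point of `V(f)`. -/
def IsSingularPt (f : Poly2 K) (p : K × K) : Prop :=
  evalAt K f p = 0 ∧ evalAt K (pdx K f) p = 0 ∧ evalAt K (pdy K f) p = 0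

/-- `f` has exactly `r` places at `p`: in `K[[x,y]]`, `f(x+a, y+b)` is, up to a unit,
a product of `r` pairwise non-associated irreducible factors. -/
def HasNumPlaces (f : Poly2 K) (p : K × K) (r : ℕ) : Prop :=
  ∃ G : Fin r → PowerSeries (PowerSeries K),
    (∀ i, Irreducible (G i)) ∧ (Pairwise fun i j => ¬Associated (G i) (G j)) ∧
      Associated (toLocal K (shiftPt K f p)) (∏ i, G i)

/-- coefficientwise `u`-derivative on `K[[u]][y]`. -/
def pdu (F : Polynomial (PowerSeries K)) : Polynomial (PowerSeries K) :=
  F.sum fun i a => Polynomial.C (PowerSeries.derivative K a) * Polynomial.X ^ i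

/-- the Milnor number of `f` at infinity: `μ_∞ = dim_K K[[u]][y]/(F_u, F_y)`. -/
def milnorInfinity (f : Poly2 K) : ℕ :=
  Module.finrank K (Polynomial (PowerSeries K) ⧸
    Ideal.span {pdu K (atInfinity K f), Polynomial.derivative (atInfinity K f)})

/-- `f` admits a nonconstant polynomial parametrization. -/
def PolyParametrized (f : Poly2 K) : Prop :=
  ∃ xt yt : Polynomial K,
    ¬((∃ c, xt = Polynomial.C c) ∧ (∃ c, yt = Polynomial.C c)) ∧
      Polynomial.eval₂ (Polynomial.aeval xt).toRingHom yt f = 0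

end

lemma adjoin_CX_X_top (K : Type*) [Field K] :
    Algebra.adjoin K ({Polynomial.C Polynomial.X, Polynomial.X} : Set (Poly2 K)) = ⊤ := by
  have hC : ∀ a : Polynomial K,
      (Polynomial.C a : Poly2 K) ∈ Algebra.adjoin K ({Polynomial.C Polynomial.X, Polynomial.X} : Set (Poly2 K)) := by
    intro a
    induction a using Polynomial.induction_on' with
    | add p q hp hq => rw [map_add]; exact add_mem hp hq
    | monomial m c =>
      rw [← Polynomial.C_mul_X_pow_eq_monomial, map_mul, map_pow]
      refine mul_mem ?_ (pow_mem (Algebra.subset_adjoin (by simp)) m)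
      have : (Polynomial.C (Polynomial.C c) : Poly2 K) = algebraMap K (Poly2 K) c := by
        rw [Polynomial.algebraMap_apply, Polynomial.algebraMap_eq]
      rw [this]
      exact Subalgebra.algebraMap_mem _ c
  rw [eq_top_iff]
  intro p _
  induction p using Polynomial.induction_on' with
  | add p q hp hq => exact add_mem (hp trivial) (hq trivial)
  | monomial n a =>
    rw [← Polynomial.C_mul_X_pow_eq_monomial]
    exact mul_mem (hC a) (pow_mem (Algebra.subset_adjoin (by simp)) n)


lemma exists_C_mem_span {K : Type*} [Field K] {f p : Poly2 K} (hmf : f.Monic)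
    (hif : Irreducible f) (hndvd : ¬ f ∣ p) :
    ∃ d : Polynomial K, d ≠ 0 ∧ Polynomial.C d ∈ Ideal.span ({f, p} : Set (Poly2 K)) := by
  classical
  set F := FractionRing (Polynomial K)
  set alg := algebraMap (Polynomial K) F with halg
  have hinj : Function.Injective alg := IsFractionRing.injective _ _
  have hinjP : Function.Injective (Polynomial.map alg) := Polynomial.map_injective _ hinj
  have hf' : Irreducible (f.map alg) :=
    (hmf.irreducible_iff_irreducible_map_fraction_map).mp hif
  have hndvd' : ¬ f.map alg ∣ p.map alg := by
    intro hdvd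
    apply hndvd
    rw [← Polynomial.modByMonic_eq_zero_iff_dvd hmf]
    have hrep : (p %ₘ f).map alg = p.map alg - f.map alg * (p /ₘ f).map alg := by
      have := Polynomial.modByMonic_add_div p f
      have h2 := congrArg (Polynomial.map alg) this
      rw [Polynomial.map_add, Polynomial.map_mul] at h2
      linear_combination h2
    have hdvdR : f.map alg ∣ (p %ₘ f).map alg := by
      rw [hrep]
      exact dvd_sub hdvd (Dvd.intro _ rfl)
    have hdeg : ((p %ₘ f).map alg).degree < (f.map alg).degree := by
      calc ((p %ₘ f).map alg).degree ≤ (p %ₘ f).degree := Polynomial.degree_map_le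
        _ < f.degree := Polynomial.degree_modByMonic_lt p hmf
        _ = (f.map alg).degree := (hmf.degree_map alg).symm
    have := Polynomial.eq_zero_of_dvd_of_degree_lt hdvdR hdeg
    apply hinjP
    rw [this, Polynomial.map_zero]
  have hcop : IsCoprime (f.map alg) (p.map alg) := hf'.coprime_iff_not_dvd.mpr hndvd'
  obtain ⟨a, b, hab⟩ := hcop
  obtain ⟨sa, hsa⟩ :=
    IsLocalization.integerNormalization_map_to_map (nonZeroDivisors (Polynomial K)) a
  obtain ⟨sb, hsb⟩ :=
    IsLocalization.integerNormalization_map_to_map (nonZeroDivisors (Polynomial K)) b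
  set A := IsLocalization.integerNormalization (nonZeroDivisors (Polynomial K)) a with hA
  set B := IsLocalization.integerNormalization (nonZeroDivisors (Polynomial K)) b with hB
  have hsa' : A.map alg = Polynomial.C (alg sa) * a := by
    rw [hsa, ← IsScalarTower.algebraMap_smul F ((sa : Polynomial K)) a, Polynomial.smul_eq_C_mul]
  have hsb' : B.map alg = Polynomial.C (alg sb) * b := by
    rw [hsb, ← IsScalarTower.algebraMap_smul F ((sb : Polynomial K)) b, Polynomial.smul_eq_C_mul]
  refine ⟨(sa : Polynomial K) * (sb : Polynomial K),
    mul_ne_zero (nonZeroDivisors.coe_ne_zero sa) (nonZeroDivisors.coe_ne_zero sb), ?_⟩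
  rw [Ideal.mem_span_pair]
  refine ⟨Polynomial.C (sb : Polynomial K) * A, Polynomial.C (sa : Polynomial K) * B, ?_⟩
  apply hinjP
  rw [Polynomial.map_add, Polynomial.map_mul, Polynomial.map_mul, Polynomial.map_mul,
    Polynomial.map_mul, Polynomial.map_C, Polynomial.map_C, hsa', hsb', Polynomial.map_C,
    map_mul alg, Polynomial.C_mul]
  linear_combination (Polynomial.C (alg sa) * Polynomial.C (alg sb)) * hab


lemma dvd_of_param {K : Type*} [Field K] {f p : Poly2 K} (hmf : f.Monic) (hif : Irreducible f)
    {xt yt : Polynomial K}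
    (hnc : ¬((∃ c, xt = Polynomial.C c) ∧ (∃ c, yt = Polynomial.C c)))
    (hf0 : Polynomial.eval₂ (Polynomial.aeval xt).toRingHom yt f = 0)
    (hp0 : Polynomial.eval₂ (Polynomial.aeval xt).toRingHom yt p = 0) : f ∣ p := by
  have hn : f.natDegree ≠ 0 := fun h =>
    hif.not_isUnit (by rw [hmf.natDegree_eq_zero.mp h]; exact isUnit_one)
  -- xt is nonconstant
  have hxt : xt.natDegree ≠ 0 := by
    intro h
    obtain ⟨c, hc⟩ := Polynomial.natDegree_eq_zero.mp h
    have hyt : yt.natDegree ≠ 0 := by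
      intro h'
      obtain ⟨c', hc'⟩ := Polynomial.natDegree_eq_zero.mp h'
      exact hnc ⟨⟨c, hc.symm⟩, ⟨c', hc'.symm⟩⟩
    have hhom : (Polynomial.aeval xt : Polynomial K →ₐ[K] Polynomial K).toRingHom =
        (Polynomial.C : K →+* Polynomial K).comp (Polynomial.evalRingHom c) := by
      apply Polynomial.ringHom_ext
      · intro k; simp [← hc]
      · simp [← hc]
    have key : Polynomial.eval₂ Polynomial.C yt (f.map (Polynomial.evalRingHom c)) = 0 := by
      rw [Polynomial.eval₂_map, ← hhom, hf0]
    have hqm : (f.map (Polynomial.evalRingHom c)).Monic := hmf.map _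
    have hcomp : (f.map (Polynomial.evalRingHom c)).comp yt = 0 := key
    have hdeg := Polynomial.natDegree_comp (p := f.map (Polynomial.evalRingHom c)) (q := yt)
    rw [hcomp, Polynomial.natDegree_zero, hmf.natDegree_map (Polynomial.evalRingHom c)] at hdeg
    exact Nat.mul_ne_zero hn hyt hdeg.symm
  by_contra hndvd
  obtain ⟨d, hd0, hdmem⟩ := exists_C_mem_span hmf hif hndvd
  set E := Polynomial.eval₂RingHom (Polynomial.aeval xt : Polynomial K →ₐ[K] Polynomial K).toRingHom yt with hE
  have hker : Ideal.span ({f, p} : Set (Poly2 K)) ≤ RingHom.ker E := by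
    rw [Ideal.span_le]
    intro z hz
    simp only [Set.mem_insert_iff, Set.mem_singleton_iff] at hz
    rcases hz with rfl | rfl
    · rw [SetLike.mem_coe, RingHom.mem_ker, hE, Polynomial.coe_eval₂RingHom]; exact hf0
    · rw [SetLike.mem_coe, RingHom.mem_ker, hE, Polynomial.coe_eval₂RingHom]; exact hp0
  have hEd : Polynomial.aeval xt d = 0 := by
    have h1 := hker hdmem
    rw [RingHom.mem_ker, hE, Polynomial.coe_eval₂RingHom, Polynomial.eval₂_C] at h1
    exact h1
  have hcomp : d.comp xt = 0 := by
    rw [Polynomial.comp, ← Polynomial.algebraMap_eq, ← Polynomial.aeval_def, hEd]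
  have hdeg := Polynomial.natDegree_comp (p := d) (q := xt)
  rw [hcomp, Polynomial.natDegree_zero] at hdeg
  have hd00 : d.natDegree = 0 := by
    rcases Nat.mul_eq_zero.mp hdeg.symm with h | h
    · exact h
    · exact absurd h hxt
  have := Polynomial.eq_C_of_natDegree_eq_zero hd00
  rw [this] at hcomp
  rw [Polynomial.C_comp] at hcomp
  exact hd0 (by rw [this, Polynomial.C_eq_zero.mp hcomp, Polynomial.C_0])


lemma finite_quot {K : Type*} [Field K] {f g : Poly2 K} (hmf : f.Monic)
    {d : Polynomial K} (hd : d ≠ 0) (hmem : Polynomial.C d ∈ Ideal.span ({f, g} : Set (Poly2 K))) :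
    Module.Finite K (Poly2 K ⧸ Ideal.span ({f, g} : Set (Poly2 K))) := by
  classical
  set I : Ideal (Poly2 K) := Ideal.span ({f, g} : Set (Poly2 K)) with hI
  let φ : Poly2 K →ₐ[K] Poly2 K ⧸ I := Ideal.Quotient.mkₐ K I
  let ψ : Polynomial K →ₐ[K] Poly2 K ⧸ I := φ.comp Polynomial.CAlgHom
  have hψ : ∀ q : Polynomial K, Polynomial.aeval (ψ Polynomial.X) q = ψ q := by
    intro q
    rw [Polynomial.aeval_algHom_apply, Polynomial.aeval_X_left_apply]
  have hψd : ψ d = 0 := by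
    show φ (Polynomial.C d) = 0
    rw [Ideal.Quotient.mkₐ_eq_mk, Ideal.Quotient.eq_zero_iff_mem]
    exact hmem
  have hx : IsIntegral K (ψ Polynomial.X) := by
    refine ⟨d * Polynomial.C (d.leadingCoeff)⁻¹, Polynomial.monic_mul_leadingCoeff_inv hd, ?_⟩
    rw [← Polynomial.aeval_def, hψ]
    show φ (Polynomial.C (d * Polynomial.C (d.leadingCoeff)⁻¹)) = 0
    rw [Ideal.Quotient.mkₐ_eq_mk, Ideal.Quotient.eq_zero_iff_mem, map_mul]
    exact Ideal.mul_mem_right _ _ hmem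
  let A : Subalgebra K (Poly2 K ⧸ I) := Algebra.adjoin K {ψ Polynomial.X}
  haveI hAfin : Module.Finite K A := ⟨(Submodule.fg_top _).mpr hx.fg_adjoin_singleton⟩
  haveI : Algebra.IsIntegral K A := Algebra.IsIntegral.of_finite K A
  have hmemA : ∀ q : Polynomial K, ψ q ∈ A := fun q => by
    rw [← hψ q]; exact Polynomial.aeval_mem_adjoin_singleton _ _
  let ρ : Polynomial K →ₐ[K] A := ψ.codRestrict A hmemA
  letI : Algebra A (Poly2 K ⧸ I) := Subalgebra.toAlgebra (R := K) (A := Poly2 K ⧸ I) (α := Poly2 K ⧸ I) A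
  have hy : IsIntegral A (φ Polynomial.X) := by
    refine ⟨f.map ρ.toRingHom, hmf.map _, ?_⟩
    rw [Polynomial.eval₂_map]
    have hcomp : (algebraMap A (Poly2 K ⧸ I)).comp ρ.toRingHom =
        (Ideal.Quotient.mk I).comp (Polynomial.C : Polynomial K →+* Poly2 K) := by
      rfl
    rw [hcomp]
    have := Polynomial.hom_eval₂ f (Polynomial.C : Polynomial K →+* Poly2 K)
      (Ideal.Quotient.mk I) Polynomial.X
    rw [Polynomial.eval₂_C_X] at this
    have hφX : φ Polynomial.X = (Ideal.Quotient.mk I) Polynomial.X := rfl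
    rw [hφX, ← this, Ideal.Quotient.eq_zero_iff_mem]
    exact Ideal.subset_span (by simp)
  have hy' : IsIntegral K (φ Polynomial.X) := isIntegral_trans (A := A) _ hy
  have htop : Algebra.adjoin K ({ψ Polynomial.X, φ Polynomial.X} : Set (Poly2 K ⧸ I)) = ⊤ := by
    have h2 := AlgHom.map_adjoin φ ({Polynomial.C Polynomial.X, Polynomial.X} : Set (Poly2 K))
    rw [Set.image_pair, adjoin_CX_X_top, Algebra.map_top] at h2
    have hsurj : Function.Surjective φ := Ideal.Quotient.mkₐ_surjective K I
    have hψX : ψ Polynomial.X = φ (Polynomial.C Polynomial.X) := rfl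
    rw [hψX, ← h2, (AlgHom.range_eq_top φ).mpr hsurj]
  refine ⟨?_⟩
  have hfg : (Algebra.adjoin K ({ψ Polynomial.X, φ Polynomial.X} : Set (Poly2 K ⧸ I))).toSubmodule.FG :=
    fg_adjoin_of_finite (s := ({ψ Polynomial.X, φ Polynomial.X} : Set (Poly2 K ⧸ I))) (Set.toFinite _) (by
      rintro x (rfl | rfl)
      · exact hx
      · exact hy')
  rw [htop] at hfg
  exact hfg


/-- Let `f ≠ g` be irreducible monic (in `y`) polynomials of `K[x][y]`,
each admitting a polynomial parametrization. If `int(f,g) = 0` then `f = g + λ₁` for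
some `λ₁ ∈ K*`. -/
theorem eq_add_const_of_intMult_eq_zero
    (K : Type*) [Field K] [IsAlgClosed K] [CharZero K]
    (f g : Poly2 K) (hne : f ≠ g) (hmf : f.Monic) (hmg : g.Monic)
    (hif : Irreducible f) (hig : Irreducible g)
    (hpf : PolyParametrized K f) (hpg : PolyParametrized K g)
    (hint : intMult K f g = 0) :
    ∃ lam₁ : K, lam₁ ≠ 0 ∧ f = g + Polynomial.C (Polynomial.C lam₁) := by
  classical
  obtain ⟨xt, yt, hnc, hfe⟩ := hpf
  obtain ⟨xs, ys, hnc', hge⟩ := hpg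
  have hnf : f.natDegree ≠ 0 := fun h =>
    hif.not_isUnit (by rw [hmf.natDegree_eq_zero.mp h]; exact isUnit_one)
  have hng : g.natDegree ≠ 0 := fun h =>
    hig.not_isUnit (by rw [hmg.natDegree_eq_zero.mp h]; exact isUnit_one)
  have hfg : ¬ f ∣ g := fun h =>
    hne (Polynomial.eq_of_monic_of_associated hmf hmg (hif.associated_of_dvd hig h))
  obtain ⟨d, hd0, hdmem⟩ := exists_C_mem_span hmf hif hfg
  haveI : Module.Finite K (Poly2 K ⧸ Ideal.span ({f, g} : Set (Poly2 K))) :=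
    finite_quot hmf hd0 hdmem
  have hsub : Subsingleton (Poly2 K ⧸ Ideal.span ({f, g} : Set (Poly2 K))) := by
    rw [intMult] at hint
    exact Module.finrank_zero_iff.mp hint
  have htop : Ideal.span ({f, g} : Set (Poly2 K)) = ⊤ :=
    Ideal.Quotient.subsingleton_iff.mp hsub
  have h1mem : (1 : Poly2 K) ∈ Ideal.span ({f, g} : Set (Poly2 K)) := by
    rw [htop]; exact Submodule.mem_top
  obtain ⟨A, B, hAB⟩ := Ideal.mem_span_pair.mp h1mem
  -- evaluate along f's parametrization
  have hEg : ∃ μ : K, μ ≠ 0 ∧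
      Polynomial.eval₂ (Polynomial.aeval xt).toRingHom yt g = Polynomial.C μ := by
    have h := congrArg (Polynomial.eval₂RingHom
      (Polynomial.aeval xt : Polynomial K →ₐ[K] Polynomial K).toRingHom yt) hAB
    rw [map_add, map_mul, map_mul, map_one] at h
    simp only [Polynomial.coe_eval₂RingHom] at h
    rw [hfe, mul_zero, zero_add] at h
    have hu : IsUnit (Polynomial.eval₂ (Polynomial.aeval xt).toRingHom yt g) :=
      IsUnit.of_mul_eq_one _ (by rw [mul_comm]; exact h)
    obtain ⟨μ, hμu, hμ⟩ := Polynomial.isUnit_iff.mp hu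
    exact ⟨μ, hμu.ne_zero, hμ.symm⟩
  have hEf : ∃ lam : K, lam ≠ 0 ∧
      Polynomial.eval₂ (Polynomial.aeval xs).toRingHom ys f = Polynomial.C lam := by
    have h := congrArg (Polynomial.eval₂RingHom
      (Polynomial.aeval xs : Polynomial K →ₐ[K] Polynomial K).toRingHom ys) hAB
    rw [map_add, map_mul, map_mul, map_one] at h
    simp only [Polynomial.coe_eval₂RingHom] at h
    rw [hge, mul_zero, add_zero] at h
    have hu : IsUnit (Polynomial.eval₂ (Polynomial.aeval xs).toRingHom ys f) :=
      IsUnit.of_mul_eq_one _ (by rw [mul_comm]; exact h)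
    obtain ⟨lam, hlu, hl⟩ := Polynomial.isUnit_iff.mp hu
    exact ⟨lam, hlu.ne_zero, hl.symm⟩
  obtain ⟨μ, hμ0, hμ⟩ := hEg
  obtain ⟨lam, hl0, hl⟩ := hEf
  -- C (C μ) evaluates to C μ
  have hCC : ∀ (zt : Polynomial K) (wt : Polynomial K) (c : K),
      Polynomial.eval₂ (Polynomial.aeval zt).toRingHom wt
        (Polynomial.C (Polynomial.C c)) = Polynomial.C c := by
    intro zt wt c
    rw [Polynomial.eval₂_C]
    show Polynomial.aeval zt (Polynomial.C c) = Polynomial.C c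
    rw [Polynomial.aeval_C, Polynomial.algebraMap_eq]
  have hdvd1 : f ∣ g - Polynomial.C (Polynomial.C μ) := by
    refine dvd_of_param hmf hif hnc hfe ?_
    rw [Polynomial.eval₂_sub, hμ, hCC, sub_self]
  have hdvd2 : g ∣ f - Polynomial.C (Polynomial.C lam) := by
    refine dvd_of_param hmg hig hnc' hge ?_
    rw [Polynomial.eval₂_sub, hl, hCC, sub_self]
  obtain ⟨q, hq⟩ := hdvd1
  obtain ⟨r, hr⟩ := hdvd2
  have hp1ne : g - Polynomial.C (Polynomial.C μ) ≠ 0 := by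
    intro h
    rw [sub_eq_zero] at h
    apply hng
    rw [h, Polynomial.natDegree_C]
  have hp2ne : f - Polynomial.C (Polynomial.C lam) ≠ 0 := by
    intro h
    rw [sub_eq_zero] at h
    apply hnf
    rw [h, Polynomial.natDegree_C]
  have hq0 : q ≠ 0 := fun h => hp1ne (by rw [hq, h, mul_zero])
  have hr0 : r ≠ 0 := fun h => hp2ne (by rw [hr, h, mul_zero])
  have hdeg1 : g.natDegree = f.natDegree + q.natDegree := by
    have h := hmf.natDegree_mul' hq0
    rw [← hq, Polynomial.natDegree_sub_C] at h
    exact h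
  have hdeg2 : f.natDegree = g.natDegree + r.natDegree := by
    have h := hmg.natDegree_mul' hr0
    rw [← hr, Polynomial.natDegree_sub_C] at h
    exact h
  have hq00 : q.natDegree = 0 := by omega
  have hqC : q = Polynomial.C (q.coeff 0) := Polynomial.eq_C_of_natDegree_eq_zero hq00
  have hlc : (g - Polynomial.C (Polynomial.C μ)).leadingCoeff = 1 := by
    rw [Polynomial.leadingCoeff, Polynomial.natDegree_sub_C, Polynomial.coeff_sub,
      Polynomial.coeff_C, if_neg hng, sub_zero]
    exact hmg
  have hc1 : q.coeff 0 = 1 := by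
    have h := congrArg Polynomial.leadingCoeff hq
    rw [hlc, Polynomial.leadingCoeff_mul, hmf.leadingCoeff, one_mul, hqC,
      Polynomial.leadingCoeff_C] at h
    exact h.symm
  have hq1 : q = 1 := by rw [hqC, hc1, Polynomial.C_1]
  rw [hq1, mul_one] at hq
  refine ⟨-μ, neg_ne_zero.mpr hμ0, ?_⟩
  rw [map_neg, map_neg, ← sub_eq_add_neg, ← hq]
end
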